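/- arXiv:1705.08654 — 4 statements merged into one kernel-verified Lean document; each statement's English description precedes it below -/
import Mathlib

section
/- Let {q_1,…,q_m} be finitely supported real filters on ℤ, and define W = [S_{q_1[-·]}^T, …, S_{q_m[-·]}^T]^T and W^T = [S_{q_1},…,S_{q_m}], where S_q is convolution with q. Then W^T W = I on ℓ²(ℤ) if and only if the filters satisfy the unitary extension principle condition Σ_{l=1}^m Σ_{k∈ℤ} q_l[n+k] q_l[k] = δ_n for all n ∈ ℤ. -/
/-!
Exchanging the (finite) sums shows that `W^T W` is convolution with `Σ_l a_l`, where
`a_l[n] = Σ_k q_l[n+k] q_l[k]` is the autocorrelation of `q_l`. A convolution operator is the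
identity on `ℓ²(ℤ)` exactly when its kernel is `δ`, as testing it on `δ` shows.
-/

open Function

noncomputable def autocorr (q : ℤ → ℝ) (n : ℤ) : ℝ := ∑' k, q (n + k) * q k

lemma hasFiniteSupport_autocorr {q : ℤ → ℝ} (hq : q.HasFiniteSupport) :
    (autocorr q).HasFiniteSupport := by
  refine (Set.Finite.sub hq hq).subset fun n hn => ?_
  obtain ⟨k, hk⟩ : ∃ k, q (n + k) * q k ≠ 0 := by
    by_contra! h
    exact hn (by simp [autocorr, h])
  exact ⟨n + k, left_ne_zero_of_mul hk, k, right_ne_zero_of_mul hk, by ring⟩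

lemma autocorr_sub (q : ℤ → ℝ) (n j : ℤ) :
    autocorr q (n - j) = ∑' k, q (n - k) * q (j - k) := by
  rw [autocorr, ← (Equiv.subLeft j).tsum_eq]
  simp [Equiv.subLeft]

lemma tsum_mul_tsum_sub_eq_tsum_autocorr_mul {q : ℤ → ℝ} (hq : q.HasFiniteSupport)
    (u : ℤ → ℝ) (n : ℤ) :
    ∑' k, q (n - k) * ∑' j, q (j - k) * u j = ∑' j, autocorr q (n - j) * u j := by
  have hfin : (uncurry fun k j => q (n - k) * q (j - k) * u j).HasFiniteSupport := by
    refine ((hq.prod hq).image fun p : ℤ × ℤ => (n - p.1, n - p.1 + p.2)).subset ?_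
    rintro ⟨k, j⟩ hkj
    have hqq := left_ne_zero_of_mul (mem_support.mp hkj)
    exact ⟨(n - k, j - k), ⟨left_ne_zero_of_mul hqq, right_ne_zero_of_mul hqq⟩, by simp⟩
  calc ∑' k, q (n - k) * ∑' j, q (j - k) * u j
      = ∑' k, ∑' j, q (n - k) * q (j - k) * u j := by
        simp_rw [← tsum_mul_left, mul_assoc]
    _ = ∑' j, ∑' k, q (n - k) * q (j - k) * u j :=
        (summable_of_hasFiniteSupport hfin).tsum_comm.symm
    _ = ∑' j, autocorr q (n - j) * u j := by
        simp_rw [tsum_mul_right, autocorr_sub]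

lemma sum_tsum_autocorr_mul {ι : Type*} (s : Finset ι) {q : ι → ℤ → ℝ}
    (hq : ∀ l, (q l).HasFiniteSupport) (u : ℤ → ℝ) (n : ℤ) :
    ∑ l ∈ s, ∑' j, autocorr (q l) (n - j) * u j =
      ∑' j, (∑ l ∈ s, autocorr (q l) (n - j)) * u j := by
  have hsummable (l : ι) : Summable fun j => autocorr (q l) (n - j) * u j := by
    refine summable_of_hasFiniteSupport (HasFiniteSupport.mul_left ?_ u)
    exact (hasFiniteSupport_autocorr (hq l)).comp_of_injective (sub_right_injective (b := n))
  simp_rw [Finset.sum_mul]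
  exact (Summable.tsum_finsetSum fun l _ => hsummable l).symm

lemma tsum_sub_mul_eq_self_iff (a : ℤ → ℝ) :
    (∀ u : ℤ → ℝ, Memℓp u 2 → ∀ n, ∑' j, a (n - j) * u j = u n) ↔
      ∀ n, a n = if n = 0 then 1 else 0 := by
  constructor
  · intro h n
    have hδ := h (Pi.single 0 1) (lp.single (E := fun _ : ℤ => ℝ) 2 0 1).2 n
    rwa [tsum_eq_single 0 (fun j hj => by simp [hj]), Pi.single_eq_same, mul_one, sub_zero,
      Pi.single_apply] at hδ
  · intro h u _ n
    simp_rw [h, sub_eq_zero, ite_mul, one_mul, zero_mul]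
    exact tsum_ite_eq' n u

/-- For finitely supported filters q₁,…,q_m on ℤ, the perfect reconstruction
property W^T W = I on ℓ²(ℤ) holds iff the unitary extension principle condition
∑_l ∑_k q_l[n+k] q_l[k] = δ_n holds for all n. Here
(W u)_{l,k} = ∑_j q_l[j−k] u[j] (convolution with q_l[-·]) and
(W^T v)[n] = ∑_l ∑_k q_l[n−k] v_l[k]. -/
theorem uep_iff_perfect_reconstruction
    (m : ℕ) (q : Fin m → ℤ → ℝ)
    (hq : ∀ l, (Function.support (q l)).Finite) :
    (∀ u : ℤ → ℝ, Memℓp u 2 →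
        ∀ n : ℤ,
          (∑ l : Fin m, ∑' k : ℤ, q l (n - k) * (∑' j : ℤ, q l (j - k) * u j)) = u n) ↔
      (∀ n : ℤ,
        (∑ l : Fin m, ∑' k : ℤ, q l (n + k) * q l k) = if n = 0 then (1 : ℝ) else 0) := by
  simp_rw [tsum_mul_tsum_sub_eq_tsum_autocorr_mul (hq _), sum_tsum_autocorr_mul _ hq]
  exact tsum_sub_mul_eq_self_iff fun n => ∑ l, autocorr (q l) n
end

section
/- The minimizer over matrices D with D D^T = I of ‖D^T G − V‖_F² + (β/μ)‖D − D₀‖_F² (scaled by μ/2 and β/2 respectively) is D* = X Y^T, where X Σ Y^T is a singular value decomposition of G V^T + (β/μ) D₀, provided G V^T + (β/μ) D₀ has full rank. -/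
/-!
For orthogonal `D` both squared norms expand with `‖Dᵀ G‖² = ‖G‖²` and `‖D‖² = r`, so the
objective equals a constant minus `μ · tr (Dᵀ M)` with `M = G Vᵀ + (β/μ) D₀`. Writing
`M = X Σ Yᵀ`, `tr (Dᵀ M) = tr (Q Σ)` for the orthogonal matrix `Q = Yᵀ Dᵀ X`, whose diagonal
entries are at most `1`; hence `tr (Dᵀ M) ≤ ∑ σᵢ`, with equality at `D = X Yᵀ` where `Q = 1`.
-/

open Matrix

def frobSq {n p : ℕ} (A : Matrix (Fin n) (Fin p) ℝ) : ℝ :=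
  ∑ i, ∑ j, (A i j) ^ 2

section UnitaryGroup

variable {n : Type*} [Fintype n] [DecidableEq n]

lemma mem_unitaryGroup_iff_mul_transpose {A : Matrix n n ℝ} :
    A ∈ unitaryGroup n ℝ ↔ A * Aᵀ = 1 := by
  rw [mem_unitaryGroup_iff, star_eq_conjTranspose, conjTranspose_eq_transpose_of_trivial]

lemma diag_le_one_of_mem_unitaryGroup {Q : Matrix n n ℝ} (hQ : Q ∈ unitaryGroup n ℝ) (i : n) :
    Q i i ≤ 1 :=
  (le_abs_self _).trans (entry_norm_bound_of_unitary hQ i i)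

lemma trace_mul_diagonal_le_sum {Q : Matrix n n ℝ} (hQ : Q ∈ unitaryGroup n ℝ) {σ : n → ℝ}
    (hσ : ∀ i, 0 ≤ σ i) : trace (Q * diagonal σ) ≤ ∑ i, σ i := by
  simp only [trace, diag, mul_diagonal]
  gcongr with i
  exact mul_le_of_le_one_left (hσ i) (diag_le_one_of_mem_unitaryGroup hQ i)

lemma trace_transpose_mul_svd_le {D X Y : Matrix n n ℝ} (hD : D ∈ unitaryGroup n ℝ)
    (hX : X ∈ unitaryGroup n ℝ) (hY : Y ∈ unitaryGroup n ℝ) {σ : n → ℝ} (hσ : ∀ i, 0 ≤ σ i) :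
    trace (Dᵀ * (X * diagonal σ * Yᵀ)) ≤ ∑ i, σ i := by
  have hQ : Yᵀ * Dᵀ * X ∈ unitaryGroup n ℝ :=
    mul_mem (mul_mem (transpose_mem_unitaryGroup_iff.2 hY) (transpose_mem_unitaryGroup_iff.2 hD)) hX
  calc trace (Dᵀ * (X * diagonal σ * Yᵀ)) = trace (Yᵀ * Dᵀ * X * diagonal σ) := by
        rw [← Matrix.mul_assoc, trace_mul_cycle, ← Matrix.mul_assoc]
    _ ≤ ∑ i, σ i := trace_mul_diagonal_le_sum hQ hσ

lemma trace_transpose_mul_svd_eq_sum {X Y : Matrix n n ℝ} (hX : X ∈ unitaryGroup n ℝ)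
    (hY : Y ∈ unitaryGroup n ℝ) (σ : n → ℝ) :
    trace ((X * Yᵀ)ᵀ * (X * diagonal σ * Yᵀ)) = ∑ i, σ i := by
  have hXX : Xᵀ * X = 1 := mul_eq_one_comm.1 (mem_unitaryGroup_iff_mul_transpose.1 hX)
  have hYY : Yᵀ * Y = 1 := mul_eq_one_comm.1 (mem_unitaryGroup_iff_mul_transpose.1 hY)
  rw [transpose_mul, transpose_transpose, Matrix.mul_assoc, ← Matrix.mul_assoc Xᵀ,
    ← Matrix.mul_assoc Xᵀ, hXX, Matrix.one_mul, trace_mul_cycle', ← Matrix.mul_assoc, hYY,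
    Matrix.one_mul, trace_diagonal]

lemma trace_transpose_mul_le_of_svd {D X Y : Matrix n n ℝ} (hD : D ∈ unitaryGroup n ℝ)
    (hX : X ∈ unitaryGroup n ℝ) (hY : Y ∈ unitaryGroup n ℝ) {σ : n → ℝ} (hσ : ∀ i, 0 ≤ σ i) :
    trace (Dᵀ * (X * diagonal σ * Yᵀ)) ≤ trace ((X * Yᵀ)ᵀ * (X * diagonal σ * Yᵀ)) := by
  rw [trace_transpose_mul_svd_eq_sum hX hY]
  exact trace_transpose_mul_svd_le hD hX hY hσ

end UnitaryGroup

lemma frobSq_eq_trace {n p : ℕ} (A : Matrix (Fin n) (Fin p) ℝ) :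
    frobSq A = trace (A * Aᵀ) := by
  simp [frobSq, trace, mul_apply, sq]

lemma frobSq_sub {n p : ℕ} (A B : Matrix (Fin n) (Fin p) ℝ) :
    frobSq (A - B) = frobSq A + frobSq B - 2 * trace (A * Bᵀ) := by
  have hswap : trace (B * Aᵀ) = trace (A * Bᵀ) := by
    rw [← trace_transpose, transpose_mul, transpose_transpose]
  simp only [frobSq_eq_trace, Matrix.sub_mul, Matrix.mul_sub, transpose_sub, trace_sub, hswap]
  ring

section Orthogonal

variable {r : ℕ} {D : Matrix (Fin r) (Fin r) ℝ}

lemma frobSq_transpose_mul_sub {p : ℕ} (hD : D * Dᵀ = 1) (G V : Matrix (Fin r) (Fin p) ℝ) :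
    frobSq (Dᵀ * G - V) = frobSq G + frobSq V - 2 * trace (Dᵀ * (G * Vᵀ)) := by
  have hG : frobSq (Dᵀ * G) = frobSq G := by
    rw [frobSq_eq_trace, frobSq_eq_trace, transpose_mul, transpose_transpose, ← Matrix.mul_assoc,
      trace_mul_comm, ← Matrix.mul_assoc, ← Matrix.mul_assoc, hD, Matrix.one_mul]
  rw [frobSq_sub, hG, Matrix.mul_assoc]

lemma frobSq_sub_of_mul_transpose_eq_one (hD : D * Dᵀ = 1) (D₀ : Matrix (Fin r) (Fin r) ℝ) :
    frobSq (D - D₀) = r + frobSq D₀ - 2 * trace (Dᵀ * D₀) := by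
  rw [frobSq_sub, frobSq_eq_trace D, hD, trace_one, Fintype.card_fin, ← trace_transpose,
    transpose_mul, transpose_transpose, trace_mul_comm]

lemma objective_eq_sub_trace {p : ℕ} (hD : D * Dᵀ = 1) (G V : Matrix (Fin r) (Fin p) ℝ)
    (D₀ : Matrix (Fin r) (Fin r) ℝ) {μ : ℝ} (hμ : μ ≠ 0) (β : ℝ) :
    μ / 2 * frobSq (Dᵀ * G - V) + β / 2 * frobSq (D - D₀) =
      μ / 2 * (frobSq G + frobSq V) + β / 2 * (r + frobSq D₀) -
        μ * trace (Dᵀ * (G * Vᵀ + (β / μ) • D₀)) := by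
  rw [frobSq_transpose_mul_sub hD, frobSq_sub_of_mul_transpose_eq_one hD, Matrix.mul_add,
    trace_add, Matrix.mul_smul, trace_smul, smul_eq_mul]
  field_simp
  ring

end Orthogonal

theorem svd_gives_orthogonal_procrustes_minimizer_general
    {r p : ℕ} (G V : Matrix (Fin r) (Fin p) ℝ) (D₀ : Matrix (Fin r) (Fin r) ℝ)
    (μ β : ℝ) (hμ : 0 < μ)
    (X Y : Matrix (Fin r) (Fin r) ℝ) (σ : Fin r → ℝ)
    (hX : X * Xᵀ = 1) (hY : Y * Yᵀ = 1) (hσ : ∀ i, 0 ≤ σ i)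
    (hSVD : G * Vᵀ + (β / μ) • D₀ = X * Matrix.diagonal σ * Yᵀ) :
    (X * Yᵀ) * (X * Yᵀ)ᵀ = 1 ∧
      ∀ D : Matrix (Fin r) (Fin r) ℝ, D * Dᵀ = 1 →
        μ / 2 * frobSq ((X * Yᵀ)ᵀ * G - V) + β / 2 * frobSq (X * Yᵀ - D₀) ≤
          μ / 2 * frobSq (Dᵀ * G - V) + β / 2 * frobSq (D - D₀) := by
  have hX' := mem_unitaryGroup_iff_mul_transpose.2 hX
  have hY' := mem_unitaryGroup_iff_mul_transpose.2 hY
  have hXY : X * Yᵀ * (X * Yᵀ)ᵀ = 1 :=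
    mem_unitaryGroup_iff_mul_transpose.1 (mul_mem hX' (transpose_mem_unitaryGroup_iff.2 hY'))
  refine ⟨hXY, fun D hD => ?_⟩
  rw [objective_eq_sub_trace hXY G V D₀ hμ.ne' β, objective_eq_sub_trace hD G V D₀ hμ.ne' β, hSVD]
  gcongr
  exact trace_transpose_mul_le_of_svd (mem_unitaryGroup_iff_mul_transpose.2 hD) hX' hY' hσ

/-- The minimizer over orthogonal D (D Dᵀ = I) of
(μ/2)‖Dᵀ G − V‖_F² + (β/2)‖D − D₀‖_F² is D* = X Yᵀ, where X Σ Yᵀ is an SVD of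
M = G Vᵀ + (β/μ) D₀, provided M has full rank. -/
theorem svd_gives_orthogonal_procrustes_minimizer
    {r p : ℕ} (G V : Matrix (Fin r) (Fin p) ℝ) (D₀ : Matrix (Fin r) (Fin r) ℝ)
    (μ β : ℝ) (hμ : 0 < μ) (hβ : 0 < β)
    (X Y : Matrix (Fin r) (Fin r) ℝ) (σ : Fin r → ℝ)
    (hX : X * Xᵀ = 1) (hY : Y * Yᵀ = 1) (hσ : ∀ i, 0 ≤ σ i)
    (hSVD : G * Vᵀ + (β / μ) • D₀ = X * Matrix.diagonal σ * Yᵀ)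
    (hrank : (G * Vᵀ + (β / μ) • D₀).det ≠ 0) :
    (X * Yᵀ) * (X * Yᵀ)ᵀ = 1 ∧
      ∀ D : Matrix (Fin r) (Fin r) ℝ, D * Dᵀ = 1 →
        μ / 2 * frobSq ((X * Yᵀ)ᵀ * G - V) + β / 2 * frobSq (X * Yᵀ - D₀) ≤
          μ / 2 * frobSq (Dᵀ * G - V) + β / 2 * frobSq (D - D₀) :=
  svd_gives_orthogonal_procrustes_minimizer_general G V D₀ μ β hμ X Y σ hX hY hσ hSVD
end

section
/- In the proximal alternating minimization algorithm for the joint-sparsity data-driven tight frame model, the frame coefficient iterates remain bounded: if u₁ᵏ ∈ [0,a₁]^N, u₂ᵏ ∈ [0,a₂]^N, and W₁ᵏ, W₂ᵏ satisfy (W_iᵏ)^T W_iᵏ = I for all k, and v^{k+1} is obtained by generalized hard thresholding of ((μ₁W₁^{k+1}u₁^{k+1}+γᵏv₁ᵏ)/(μ₁+γᵏ), (μ₂W₂^{k+1}u₂^{k+1}+γᵏv₂ᵏ)/(μ₂+γᵏ)) with γᵏ > 0, and initially ‖v₁⁰‖₂ ≤ ‖u₁⁰‖₂, ‖v₂⁰‖₂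 ≤ ‖u₂⁰‖₂, then ‖v₁ᵏ‖₂ ≤ a₁√N and ‖v₂ᵏ‖₂ ≤ a₂√N for all k ≥ 0. -/
/-!
Each new coefficient vector is obtained from the weighted average
`(μ W u + γ v) / (μ + γ)` by zeroing some entries, so its norm is at most the larger of `‖W u‖`
and `‖v‖`. Since `Wᵀ W = I`, `‖W u‖ = ‖u‖ ≤ a √N` for `u ∈ [0,a]^N`, and the bound `a √N`
propagates by induction from `‖v⁰‖ ≤ ‖u⁰‖`.
-/

open Matrix

/-- Euclidean norm of a finite vector. -/
noncomputable def vecEnorm {n : ℕ} (v : Fin n → ℝ) : ℝ :=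
  Real.sqrt (∑ i, (v i) ^ 2)

section vecEnorm

variable {n : ℕ}

theorem vecEnorm_eq_norm (v : Fin n → ℝ) : vecEnorm v = ‖WithLp.toLp 2 v‖ := by
  simp [vecEnorm, EuclideanSpace.norm_eq, sq_abs]

theorem vecEnorm_eq_sqrt_dotProduct (v : Fin n → ℝ) : vecEnorm v = Real.sqrt (v ⬝ᵥ v) := by
  simp only [vecEnorm, dotProduct, sq]

theorem vecEnorm_le_of_sq_le {v w : Fin n → ℝ} (h : ∀ i, v i ^ 2 ≤ w i ^ 2) :
    vecEnorm v ≤ vecEnorm w :=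
  Real.sqrt_le_sqrt (Finset.sum_le_sum fun i _ => h i)

theorem vecEnorm_const {a : ℝ} (ha : 0 ≤ a) : vecEnorm (fun _ : Fin n => a) = a * Real.sqrt n := by
  rw [vecEnorm, Finset.sum_const, Finset.card_univ, Fintype.card_fin, nsmul_eq_mul,
    Real.sqrt_mul (Nat.cast_nonneg n), Real.sqrt_sq ha, mul_comm]

theorem vecEnorm_le_of_mem_Icc {u : Fin n → ℝ} {a : ℝ} (ha : 0 ≤ a)
    (hu : ∀ i, 0 ≤ u i ∧ u i ≤ a) : vecEnorm u ≤ a * Real.sqrt n := by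
  rw [← vecEnorm_const ha]
  exact vecEnorm_le_of_sq_le fun i => pow_le_pow_left₀ (hu i).1 (hu i).2 2

theorem vecEnorm_mulVec_of_transpose_mul_self {m : ℕ} {W : Matrix (Fin m) (Fin n) ℝ}
    (hW : Wᵀ * W = 1) (u : Fin n → ℝ) : vecEnorm (W *ᵥ u) = vecEnorm u := by
  rw [vecEnorm_eq_sqrt_dotProduct, vecEnorm_eq_sqrt_dotProduct, dotProduct_mulVec,
    ← mulVec_transpose, mulVec_mulVec, hW, one_mulVec]

theorem vecEnorm_weightedAverage_le {x v : Fin n → ℝ} {μ g C : ℝ} (hμ : 0 ≤ μ) (hg : 0 ≤ g)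
    (hμg : 0 < μ + g) (hx : vecEnorm x ≤ C) (hv : vecEnorm v ≤ C) :
    vecEnorm (fun j => (μ * x j + g * v j) / (μ + g)) ≤ C := by
  have hmem := convex_iff_div.1 (convex_closedBall (0 : EuclideanSpace ℝ (Fin n)) C)
    (x := WithLp.toLp 2 x) (by simpa [← vecEnorm_eq_norm] using hx)
    (y := WithLp.toLp 2 v) (by simpa [← vecEnorm_eq_norm] using hv) hμ hg hμg
  rw [mem_closedBall_zero_iff] at hmem
  convert hmem using 1
  rw [vecEnorm_eq_norm]
  congr 1
  ext j
  simp only [PiLp.add_apply, PiLp.smul_apply, smul_eq_mul]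
  ring

theorem vecEnorm_le_of_keep_or_zero {v w : Fin n → ℝ} (h : ∀ j, v j = w j ∨ v j = 0) :
    vecEnorm v ≤ vecEnorm w :=
  vecEnorm_le_of_sq_le fun j => by
    rcases h j with hj | hj <;> simp [hj, sq_nonneg]

end vecEnorm

theorem vecEnorm_thresholdedAverage_le {n : ℕ} {x v v' : Fin n → ℝ} {μ g C : ℝ} (hμ : 0 < μ)
    (hg : 0 ≤ g) (hv' : ∀ j, v' j = (μ * x j + g * v j) / (μ + g) ∨ v' j = 0)
    (hx : vecEnorm x ≤ C) (hv : vecEnorm v ≤ C) : vecEnorm v' ≤ C :=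
  (vecEnorm_le_of_keep_or_zero hv').trans
    (vecEnorm_weightedAverage_le hμ.le hg (by linarith) hx hv)

theorem vecEnorm_thresholdedAverage_iterates_le {n : ℕ} {x v : ℕ → Fin n → ℝ} {μ C : ℝ}
    {γ : ℕ → ℝ} (hμ : 0 < μ) (hγ : ∀ k, 0 ≤ γ k)
    (hv : ∀ k j, v (k + 1) j = (μ * x (k + 1) j + γ k * v k j) / (μ + γ k) ∨ v (k + 1) j = 0)
    (hx : ∀ k, vecEnorm (x (k + 1)) ≤ C) (hv₀ : vecEnorm (v 0) ≤ C) :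
    ∀ k, vecEnorm (v k) ≤ C
  | 0 => hv₀
  | k + 1 =>
    vecEnorm_thresholdedAverage_le hμ (hγ k) (hv k) (hx k)
      (vecEnorm_thresholdedAverage_iterates_le hμ hγ hv hx hv₀ k)

/-- Boundedness of the frame-coefficient iterates in the PAM algorithm for
the joint-sparsity data-driven tight frame model: if the image iterates stay in the boxes
[0,a₁]^N, [0,a₂]^N, the frames satisfy Wᵀ W = I, and v^{k+1} results from generalized hard
thresholding of the weighted averages ((μᵢ Wᵢ^{k+1} uᵢ^{k+1} + γᵏ vᵢᵏ)/(μᵢ + γᵏ)), then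
‖v₁ᵏ‖₂ ≤ a₁√N and ‖v₂ᵏ‖₂ ≤ a₂√N for all k. -/
theorem pam_coefficients_bounded
    {N M : ℕ} (a₁ a₂ μ₁ μ₂ : ℝ) (ha₁ : 0 < a₁) (ha₂ : 0 < a₂)
    (hμ₁ : 0 < μ₁) (hμ₂ : 0 < μ₂)
    (L U : ℝ) (hLU : 0 < L ∧ L < U) (γ : ℕ → ℝ) (hγ : ∀ k, L ≤ γ k ∧ γ k ≤ U)
    (u₁ u₂ : ℕ → Fin N → ℝ) (W₁ W₂ : ℕ → Matrix (Fin M) (Fin N) ℝ)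
    (v₁ v₂ : ℕ → Fin M → ℝ)
    (hu₁ : ∀ k i, 0 ≤ u₁ k i ∧ u₁ k i ≤ a₁)
    (hu₂ : ∀ k i, 0 ≤ u₂ k i ∧ u₂ k i ≤ a₂)
    (hW₁ : ∀ k, (W₁ k)ᵀ * W₁ k = 1) (hW₂ : ∀ k, (W₂ k)ᵀ * W₂ k = 1)
    (hthresh : ∀ k, ∀ j : Fin M,
      (v₁ (k + 1) j = (μ₁ * (W₁ (k + 1) *ᵥ u₁ (k + 1)) j + γ k * v₁ k j) / (μ₁ + γ k) ∧
        v₂ (k + 1) j = (μ₂ * (W₂ (k + 1) *ᵥ u₂ (k + 1)) j + γ k * v₂ k j) / (μ₂ + γ k)) ∨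
      (v₁ (k + 1) j = 0 ∧ v₂ (k + 1) j = 0))
    (hinit₁ : vecEnorm (v₁ 0) ≤ vecEnorm (u₁ 0)) (hinit₂ : vecEnorm (v₂ 0) ≤ vecEnorm (u₂ 0)) :
    ∀ k : ℕ, vecEnorm (v₁ k) ≤ a₁ * Real.sqrt N ∧ vecEnorm (v₂ k) ≤ a₂ * Real.sqrt N := by
  have hγ_nonneg : ∀ k, 0 ≤ γ k := fun k => hLU.1.le.trans (hγ k).1
  have hu₁_le k : vecEnorm (u₁ k) ≤ a₁ * Real.sqrt N := vecEnorm_le_of_mem_Icc ha₁.le (hu₁ k)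
  have hu₂_le k : vecEnorm (u₂ k) ≤ a₂ * Real.sqrt N := vecEnorm_le_of_mem_Icc ha₂.le (hu₂ k)
  intro k
  constructor
  · refine vecEnorm_thresholdedAverage_iterates_le (x := fun k => W₁ k *ᵥ u₁ k) hμ₁ hγ_nonneg
      (fun k j => (hthresh k j).imp And.left And.left) (fun k => ?_) (hinit₁.trans (hu₁_le 0)) k
    exact (vecEnorm_mulVec_of_transpose_mul_self (hW₁ (k + 1)) _).trans_le (hu₁_le (k + 1))
  · refine vecEnorm_thresholdedAverage_iterates_le (x := fun k => W₂ k *ᵥ u₂ k) hμ₂ hγ_nonneg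
      (fun k j => (hthresh k j).imp And.right And.right) (fun k => ?_) (hinit₂.trans (hu₂_le 0)) k
    exact (vecEnorm_mulVec_of_transpose_mul_self (hW₂ (k + 1)) _).trans_le (hu₂_le (k + 1))
end

section
/- The Poisson negative log-likelihood Φ₁(u) = ⟨1, Au + c⟩ − ⟨f, ln(Au + c)⟩ is strictly convex and coercive on the nonnegative orthant whenever f > 0 entrywise, c > 0 entrywise, A has nonnegative entries, A1 > 0, and A^T 1 > 0, and A is injective. -/
open Matrix Set

/-!
Writing `x = A u + c`, `Φ₁(u) = ∑ᵢ (xᵢ - fᵢ log xᵢ)` is a separable sum of strictly convex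
functions of `x`, precomposed with the affine map `u ↦ A u + c`, which is injective because `A`
is; hence `Φ₁` is strictly convex. For coercivity, `log y ≤ y - 1` at `y = xᵢ / (2 fᵢ)` gives
`xᵢ - fᵢ log xᵢ ≥ xᵢ / 2 - const`, and on the orthant `∑ᵢ (A u)ᵢ ≥ κ ∑ⱼ uⱼ ≥ κ ‖u‖₂`, where
`κ > 0` is the least column sum of `A`.
-/

theorem StrictConcaveOn.const_mul {E : Type*} [AddCommGroup E] [Module ℝ E] {s : Set E}
    {f : E → ℝ} {c : ℝ} (hc : 0 < c) (hf : StrictConcaveOn ℝ s f) :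
    StrictConcaveOn ℝ s fun x => c * f x :=
  ⟨hf.1, fun x hx y hy hxy a b ha hb hab => by
    simpa only [smul_eq_mul, mul_add, mul_left_comm c] using
      mul_lt_mul_of_pos_left (hf.2 hx hy hxy ha hb hab) hc⟩

theorem strictConvexOn_sub_mul_log {φ : ℝ} (hφ : 0 < φ) :
    StrictConvexOn ℝ (Ioi 0) fun t => t - φ * Real.log t :=
  (convexOn_id (convex_Ioi 0)).sub_strictConcaveOn (strictConcaveOn_log_Ioi.const_mul hφ)

theorem StrictConvexOn.comp_affineMap_of_injective {𝕜 E F β : Type*} [Ring 𝕜]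
    [PartialOrder 𝕜] [AddCommGroup E] [AddCommGroup F] [AddCommMonoid β] [PartialOrder β]
    [Module 𝕜 E] [Module 𝕜 F] [SMul 𝕜 β] {f : F → β} {s : Set F}
    (g : E →ᵃ[𝕜] F) (hg : Function.Injective g) (hf : StrictConvexOn 𝕜 s f) :
    StrictConvexOn 𝕜 (g ⁻¹' s) (f ∘ g) :=
  ⟨hf.1.affine_preimage _, fun x hx y hy hxy a b ha hb hab => by
    simpa only [Function.comp_apply, Convex.combo_affine_apply hab] using
      hf.2 hx hy (hg.ne hxy) ha hb hab⟩

theorem strictConvexOn_sum_pi {ι : Type*} [Fintype ι] {t : ι → Set ℝ} {g : ι → ℝ → ℝ}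
    (hg : ∀ i, StrictConvexOn ℝ (t i) (g i)) :
    StrictConvexOn ℝ (univ.pi t) fun x => ∑ i, g i (x i) := by
  refine ⟨convex_pi fun i _ => (hg i).1, fun x hx y hy hxy a b ha hb hab => ?_⟩
  obtain ⟨i₀, hi₀⟩ := Function.ne_iff.1 hxy
  simp only [smul_eq_mul, Finset.mul_sum, ← Finset.sum_add_distrib]
  refine Finset.sum_lt_sum (fun i _ => ?_) ⟨i₀, Finset.mem_univ _, ?_⟩
  · exact (hg i).convexOn.2 (hx i trivial) (hy i trivial) ha.le hb.le hab
  · exact (hg i₀).2 (hx i₀ trivial) (hy i₀ trivial) hi₀ ha hb hab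

theorem Real.sqrt_sum_sq_le_sum {ι : Type*} (s : Finset ι) {u : ι → ℝ} (hu : ∀ i ∈ s, 0 ≤ u i) :
    √(∑ i ∈ s, u i ^ 2) ≤ ∑ i ∈ s, u i :=
  Real.sqrt_le_iff.2 ⟨Finset.sum_nonneg hu, Finset.sum_sq_le_sq_sum_of_nonneg hu⟩

theorem Finite.exists_pos_forall_le {ι : Type*} [Finite ι] {g : ι → ℝ} (hg : ∀ i, 0 < g i) :
    ∃ κ > 0, ∀ i, κ ≤ g i := by
  cases isEmpty_or_nonempty ι
  · exact ⟨1, one_pos, isEmptyElim⟩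
  · obtain ⟨i₀, hi₀⟩ := Finite.exists_min g
    exact ⟨g i₀, hg i₀, hi₀⟩

theorem half_sub_const_le_sub_mul_log {φ t : ℝ} (hφ : 0 < φ) (ht : 0 < t) :
    t / 2 - φ * (Real.log (2 * φ) - 1) ≤ t - φ * Real.log t := by
  have h := Real.log_le_sub_one_of_pos (div_pos ht (mul_pos two_pos hφ))
  rw [Real.log_div ht.ne' (mul_pos two_pos hφ).ne'] at h
  have h' := mul_le_mul_of_nonneg_left h hφ.le
  have hrhs : φ * (t / (2 * φ) - 1) = t / 2 - φ := by field_simp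
  linarith

namespace Matrix

variable {m n : Type*} [Fintype n]

theorem mulVec_nonneg {A : Matrix m n ℝ} (hA : ∀ i j, 0 ≤ A i j) {u : n → ℝ}
    (hu : ∀ j, 0 ≤ u j) (i : m) : 0 ≤ (A *ᵥ u) i :=
  Finset.sum_nonneg fun j _ => mul_nonneg (hA i j) (hu j)

theorem mul_sum_le_sum_mulVec [Fintype m] {A : Matrix m n ℝ} {κ : ℝ} (hκ : ∀ j, κ ≤ ∑ i, A i j)
    {u : n → ℝ} (hu : ∀ j, 0 ≤ u j) : κ * ∑ j, u j ≤ ∑ i, (A *ᵥ u) i :=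
  calc κ * ∑ j, u j = ∑ j, κ * u j := Finset.mul_sum _ _ _
    _ ≤ ∑ j, (∑ i, A i j) * u j :=
      Finset.sum_le_sum fun j _ => mul_le_mul_of_nonneg_right (hκ j) (hu j)
    _ = ∑ i, (A *ᵥ u) i := by
      simp only [mulVec, dotProduct, Finset.sum_mul]
      exact Finset.sum_comm

end Matrix

section Poisson

variable {m n : Type*} [Fintype m] [Fintype n]

noncomputable def poissonNegLogLik (A : Matrix m n ℝ) (c f : m → ℝ) (u : n → ℝ) : ℝ :=
  (∑ i, ((A *ᵥ u) i + c i)) - ∑ i, f i * Real.log ((A *ᵥ u) i + c i)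

variable {A : Matrix m n ℝ} {c f : m → ℝ}

theorem poissonNegLogLik_eq_sum (u : n → ℝ) :
    poissonNegLogLik A c f u =
      ∑ i, ((A *ᵥ u + c) i - f i * Real.log ((A *ᵥ u + c) i)) :=
  (Finset.sum_sub_distrib ..).symm

theorem strictConvexOn_poissonNegLogLik (hA : ∀ i j, 0 ≤ A i j) (hc : ∀ i, 0 < c i)
    (hf : ∀ i, 0 < f i) (hinj : Function.Injective A.mulVec) :
    StrictConvexOn ℝ {u | ∀ j, 0 ≤ u j} (poissonNegLogLik A c f) := by
  let g : (n → ℝ) →ᵃ[ℝ] (m → ℝ) := A.mulVecLin.toAffineMap + AffineMap.const ℝ _ c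
  have hg : Function.Injective g := fun u v h => hinj (add_right_cancel h)
  have hmaps : {u : n → ℝ | ∀ j, 0 ≤ u j} ⊆ g ⁻¹' univ.pi fun _ => Ioi 0 :=
    fun u hu i _ => add_pos_of_nonneg_of_pos (mulVec_nonneg hA hu i) (hc i)
  have hsep := strictConvexOn_sum_pi fun i => strictConvexOn_sub_mul_log (hf i)
  exact ((hsep.comp_affineMap_of_injective g hg).subset hmaps (convex_Ici 0)).congr
    fun u _ => (poissonNegLogLik_eq_sum u).symm

theorem exists_pos_mul_sqrt_sub_le_poissonNegLogLik (hA : ∀ i j, 0 ≤ A i j)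
    (hcol : ∀ j, 0 < ∑ i, A i j) (hc : ∀ i, 0 < c i) (hf : ∀ i, 0 < f i) :
    ∃ a > 0, ∃ b, ∀ u : n → ℝ, (∀ j, 0 ≤ u j) →
      a * √(∑ j, u j ^ 2) - b ≤ poissonNegLogLik A c f u := by
  obtain ⟨κ, hκ, hκle⟩ := Finite.exists_pos_forall_le hcol
  refine ⟨κ / 2, half_pos hκ, ∑ i, f i * (Real.log (2 * f i) - 1), fun u hu => ?_⟩
  have hsum : κ * ∑ j, u j ≤ ∑ i, (A *ᵥ u + c) i :=
    (mul_sum_le_sum_mulVec hκle hu).trans <|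
      Finset.sum_le_sum fun i _ => le_add_of_nonneg_right (hc i).le
  have hnorm := mul_le_mul_of_nonneg_left (Real.sqrt_sum_sq_le_sum Finset.univ fun j _ => hu j)
    (half_pos hκ).le
  calc _ ≤ (κ * ∑ j, u j) / 2 - ∑ i, f i * (Real.log (2 * f i) - 1) := by linarith
    _ ≤ ∑ i, ((A *ᵥ u + c) i / 2 - f i * (Real.log (2 * f i) - 1)) := by
        rw [Finset.sum_sub_distrib, ← Finset.sum_div]
        linarith
    _ ≤ poissonNegLogLik A c f u := by
        rw [poissonNegLogLik_eq_sum]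
        exact Finset.sum_le_sum fun i _ => half_sub_const_le_sub_mul_log (hf i)
          (add_pos_of_nonneg_of_pos (mulVec_nonneg hA hu i) (hc i))

end Poisson

theorem poisson_loglik_strictconvex_coercive_general
    {M N : ℕ} (A : Matrix (Fin M) (Fin N) ℝ) (c f : Fin M → ℝ)
    (hA : ∀ i j, 0 ≤ A i j)
    (hcol : ∀ j, 0 < ∑ i, A i j)
    (hc : ∀ i, 0 < c i) (hf : ∀ i, 0 < f i)
    (hinj : Function.Injective fun u : Fin N → ℝ => A *ᵥ u) :
    let Φ : (Fin N → ℝ) → ℝ := fun u =>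
      (∑ i, ((A *ᵥ u) i + c i)) - ∑ i, f i * Real.log ((A *ᵥ u) i + c i)
    StrictConvexOn ℝ {u : Fin N → ℝ | ∀ i, 0 ≤ u i} Φ ∧
      ∀ C : ℝ, ∃ R : ℝ, ∀ u : Fin N → ℝ, (∀ i, 0 ≤ u i) →
        R ≤ Real.sqrt (∑ i, (u i) ^ 2) → C ≤ Φ u := by
  intro Φ
  refine ⟨strictConvexOn_poissonNegLogLik hA hc hf hinj, fun C => ?_⟩
  obtain ⟨a, ha, b, hbound⟩ := exists_pos_mul_sqrt_sub_le_poissonNegLogLik hA hcol hc hf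
  refine ⟨(C + b) / a, fun u hu hR => ?_⟩
  rw [div_le_iff₀' ha] at hR
  calc C ≤ a * √(∑ j, u j ^ 2) - b := by linarith
    _ ≤ Φ u := hbound u hu

/-- The Poisson negative log-likelihood
Φ₁(u) = ⟨1, Au + c⟩ − ⟨f, ln(Au + c)⟩ is strictly convex and coercive on the nonnegative
orthant, given f > 0, c > 0, A entrywise nonnegative with positive row and column sums,
and A injective. -/
theorem poisson_loglik_strictconvex_coercive
    {M N : ℕ} (A : Matrix (Fin M) (Fin N) ℝ) (c f : Fin M → ℝ)
    (hA : ∀ i j, 0 ≤ A i j)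
    (hrow : ∀ i, 0 < ∑ j, A i j) (hcol : ∀ j, 0 < ∑ i, A i j)
    (hc : ∀ i, 0 < c i) (hf : ∀ i, 0 < f i)
    (hinj : Function.Injective fun u : Fin N → ℝ => A *ᵥ u) :
    let Φ : (Fin N → ℝ) → ℝ := fun u =>
      (∑ i, ((A *ᵥ u) i + c i)) - ∑ i, f i * Real.log ((A *ᵥ u) i + c i)
    StrictConvexOn ℝ {u : Fin N → ℝ | ∀ i, 0 ≤ u i} Φ ∧
      ∀ C : ℝ, ∃ R : ℝ, ∀ u : Fin N → ℝ, (∀ i, 0 ≤ u i) →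
        R ≤ Real.sqrt (∑ i, (u i) ^ 2) → C ≤ Φ u :=
  poisson_loglik_strictconvex_coercive_general A c f hA hcol hc hf hinj
end
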